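/- Let G be a group with elements a_1, ..., a_{g-1}, u_1, ..., u_{g-1} satisfying the braid relations within each family, a_i u_j = u_j a_i for |i-j|>1, a_i u_{i+1} u_i = u_{i+1} u_i a_{i+1}, a_{i+1} u_i u_{i+1} = u_i u_{i+1} a_i, a_1 u_1 a_1 = u_1, and u_2 a_1 a_2 u_1 = a_1 a_2. Set r = a_1 ⋯ a_{g-1} u_{g-1} ⋯ u_1. Then r a_i = a_i r and u_i r u_i = r for all i = 2, ..., g-1. -/

import Mathlib

variable {G : Type*} [Group G]

/-- `prodAsc f m = f 1 * f 2 * ⋯ * f m` (empty product for `m = 0`). -/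
def prodAsc (f : ℕ → G) (m : ℕ) : G :=
  ((List.range m).map (fun i => f (i + 1))).prod

/-- `prodDesc f m = f m * ⋯ * f 2 * f 1` (empty product for `m = 0`). -/
def prodDesc (f : ℕ → G) (m : ℕ) : G :=
  (((List.range m).reverse).map (fun i => f (i + 1))).prod

/-- The fundamental braid element: `Δ 0 = Δ 1 = 1`, `Δ (m+1) = (u 1 ⋯ u m) * Δ m`. -/
def braidDelta (u : ℕ → G) : ℕ → G
  | 0 => 1
  | m + 1 => prodAsc u m * braidDelta u m

/-!
Write `x = a₁ ⋯ a_{g-1}` and `z = u_{g-1} ⋯ u₁`. Conjugation by `z` lowers the index of each `aᵢ`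
and `uᵢ` (`i ≥ 2`) by one: the generator commutes with every letter of `z` except the adjacent
pair `uᵢ uᵢ₋₁`, which moves it down by (C2) or by the braid relation. Conjugating (C5) repeatedly
by `z` gives `uᵢ₊₁ aᵢ aᵢ₊₁ uᵢ = aᵢ aᵢ₊₁` for all `i`; with it, and with the braid relation, the same
sweep through `x` shows that `x` raises the index of `aᵢ₋₁` and sends `uᵢ₋₁⁻¹` to `uᵢ`. Composing,
`r = x z` commutes with `aᵢ` and conjugates `uᵢ⁻¹` to `uᵢ`.
-/

lemma prodAsc_succ (f : ℕ → G) (m : ℕ) : prodAsc f (m + 1) = prodAsc f m * f (m + 1) := by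
  simp [prodAsc, List.range_succ]

lemma prodDesc_succ (f : ℕ → G) (m : ℕ) : prodDesc f (m + 1) = f (m + 1) * prodDesc f m := by
  simp [prodDesc, List.range_succ]

lemma commute_prodAsc_left {f : ℕ → G} {y : G} {m : ℕ}
    (h : ∀ j, 1 ≤ j → j ≤ m → Commute (f j) y) : Commute (prodAsc f m) y := by
  induction m with
  | zero => exact Commute.one_left y
  | succ m ih =>
    rw [prodAsc_succ]
    exact (ih fun j hj hjm => h j hj (by omega)).mul_left (h (m + 1) (by omega) le_rfl)

lemma commute_prodDesc_left {f : ℕ → G} {y : G} {m : ℕ}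
    (h : ∀ j, 1 ≤ j → j ≤ m → Commute (f j) y) : Commute (prodDesc f m) y := by
  induction m with
  | zero => exact Commute.one_left y
  | succ m ih =>
    rw [prodDesc_succ]
    exact (h (m + 1) (by omega) le_rfl).mul_left (ih fun j hj hjm => h j hj (by omega))

lemma semiconjBy_prodAsc {f : ℕ → G} {x y : G} {k m : ℕ} (hkm : k + 2 ≤ m)
    (hy : ∀ j, 1 ≤ j → j ≤ k → Commute (f j) y)
    (hxy : SemiconjBy (f (k + 1) * f (k + 2)) x y)
    (hx : ∀ j, k + 2 < j → j ≤ m → Commute (f j) x) :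
    SemiconjBy (prodAsc f m) x y := by
  induction m, hkm using Nat.le_induction with
  | base =>
    rw [prodAsc_succ, prodAsc_succ, mul_assoc]
    exact SemiconjBy.mul_left (commute_prodAsc_left hy) hxy
  | succ m hkm ih =>
    rw [prodAsc_succ]
    exact (ih fun j hj hjm => hx j hj (by omega)).mul_left (hx (m + 1) (by omega) le_rfl)

lemma semiconjBy_prodDesc {f : ℕ → G} {x y : G} {k m : ℕ} (hkm : k + 2 ≤ m)
    (hx : ∀ j, 1 ≤ j → j ≤ k → Commute (f j) x)
    (hxy : SemiconjBy (f (k + 2) * f (k + 1)) x y)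
    (hy : ∀ j, k + 2 < j → j ≤ m → Commute (f j) y) :
    SemiconjBy (prodDesc f m) x y := by
  induction m, hkm using Nat.le_induction with
  | base =>
    rw [prodDesc_succ, prodDesc_succ, ← mul_assoc]
    exact hxy.mul_left (commute_prodDesc_left hx)
  | succ m hkm ih =>
    rw [prodDesc_succ]
    exact SemiconjBy.mul_left (hy (m + 1) (by omega) le_rfl) (ih fun j hj hjm => hy j hj (by omega))

lemma semiconjBy_prodAsc_of_braid {f : ℕ → G} {n k : ℕ} (hk : k + 2 ≤ n)
    (hcomm : ∀ i j, 1 ≤ i → i + 2 ≤ j → j ≤ n → Commute (f i) (f j))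
    (hbraid : f (k + 1) * f (k + 2) * f (k + 1) = f (k + 2) * f (k + 1) * f (k + 2)) :
    SemiconjBy (prodAsc f n) (f (k + 1)) (f (k + 2)) :=
  semiconjBy_prodAsc hk (fun j hj hjk => hcomm j (k + 2) hj (by omega) hk)
    (by rw [SemiconjBy, hbraid, mul_assoc])
    (fun j hj hjn => (hcomm (k + 1) j (by omega) (by omega) hjn).symm)

lemma semiconjBy_prodDesc_of_braid {f : ℕ → G} {n k : ℕ} (hk : k + 2 ≤ n)
    (hcomm : ∀ i j, 1 ≤ i → i + 2 ≤ j → j ≤ n → Commute (f i) (f j))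
    (hbraid : f (k + 1) * f (k + 2) * f (k + 1) = f (k + 2) * f (k + 1) * f (k + 2)) :
    SemiconjBy (prodDesc f n) (f (k + 2)) (f (k + 1)) :=
  semiconjBy_prodDesc hk (fun j hj hjk => hcomm j (k + 2) hj (by omega) hk)
    (by rw [SemiconjBy, ← hbraid, mul_assoc])
    (fun j hj hjn => (hcomm (k + 1) j (by omega) (by omega) hjn).symm)

lemma SemiconjBy.eq_of_eq {z x y x' y' : G} (hx : SemiconjBy z x x') (hy : SemiconjBy z y y')
    (h : x' = y') : x = y := by
  rw [SemiconjBy, h] at hx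
  exact mul_left_cancel (hx.trans hy.symm)

section TwoFamilies

variable {a u : ℕ → G} {n k : ℕ}

lemma semiconjBy_prodDesc_of_relC2 (hk : k + 2 ≤ n)
    (hcomm : ∀ i j, 1 ≤ i → i ≤ n → 1 ≤ j → j ≤ n → (i + 2 ≤ j ∨ j + 2 ≤ i) →
      Commute (a i) (u j))
    (hC2 : a (k + 1) * u (k + 2) * u (k + 1) = u (k + 2) * u (k + 1) * a (k + 2)) :
    SemiconjBy (prodDesc u n) (a (k + 2)) (a (k + 1)) :=
  semiconjBy_prodDesc hk
    (fun j hj hjk => (hcomm (k + 2) j (by omega) hk hj (by omega) (Or.inr (by omega))).symm)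
    (by rw [SemiconjBy, ← hC2, mul_assoc])
    (fun j hj hjn => (hcomm (k + 1) j (by omega) (by omega) (by omega) hjn (Or.inl hj)).symm)

lemma semiconjBy_prodAsc_inv_of_relC5 (hk : k + 2 ≤ n)
    (hcomm : ∀ i j, 1 ≤ i → i ≤ n → 1 ≤ j → j ≤ n → (i + 2 ≤ j ∨ j + 2 ≤ i) →
      Commute (a i) (u j))
    (hC5 : u (k + 2) * a (k + 1) * a (k + 2) * u (k + 1) = a (k + 1) * a (k + 2)) :
    SemiconjBy (prodAsc a n) (u (k + 1))⁻¹ (u (k + 2)) :=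
  semiconjBy_prodAsc hk
    (fun j hj hjk => hcomm j (k + 2) hj (by omega) (by omega) hk (Or.inl (by omega)))
    (by rw [SemiconjBy, mul_inv_eq_iff_eq_mul, ← mul_assoc, hC5])
    (fun j hj hjn => (hcomm j (k + 1) (by omega) hjn (by omega) (by omega) (Or.inr hj)).inv_right)

lemma relC5_of_semiconjBy {z : G}
    (ha : ∀ k, k + 2 ≤ n → SemiconjBy z (a (k + 2)) (a (k + 1)))
    (hu : ∀ k, k + 2 ≤ n → SemiconjBy z (u (k + 2)) (u (k + 1)))
    (hC5 : u 2 * a 1 * a 2 * u 1 = a 1 * a 2) :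
    ∀ k, k + 2 ≤ n → u (k + 2) * a (k + 1) * a (k + 2) * u (k + 1) = a (k + 1) * a (k + 2)
  | 0, _ => hC5
  | k + 1, hk =>
    have ha' := ha k (by omega)
    have hu' := hu k (by omega)
    SemiconjBy.eq_of_eq
      ((((hu (k + 1) hk).mul_right ha').mul_right (ha (k + 1) hk)).mul_right hu')
      (ha'.mul_right (ha (k + 1) hk)) (relC5_of_semiconjBy ha hu hC5 k (by omega))

end TwoFamilies

theorem rel_E3_E4_general (g : ℕ) (a u : ℕ → G)
    (ha1 : ∀ i j, 1 ≤ i → i + 2 ≤ j → j ≤ g - 1 → a i * a j = a j * a i)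
    (ha2 : ∀ i, 1 ≤ i → i + 1 ≤ g - 1 → a i * a (i + 1) * a i = a (i + 1) * a i * a (i + 1))
    (hu1 : ∀ i j, 1 ≤ i → i + 2 ≤ j → j ≤ g - 1 → u i * u j = u j * u i)
    (hu2 : ∀ i, 1 ≤ i → i + 1 ≤ g - 1 → u i * u (i + 1) * u i = u (i + 1) * u i * u (i + 1))
    (hC1 : ∀ i j, 1 ≤ i → i ≤ g - 1 → 1 ≤ j → j ≤ g - 1 → (i + 2 ≤ j ∨ j + 2 ≤ i) →
      a i * u j = u j * a i)
    (hC2 : ∀ i, 1 ≤ i → i ≤ g - 2 → a i * u (i + 1) * u i = u (i + 1) * u i * a (i + 1))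
    (hC5 : u 2 * a 1 * a 2 * u 1 = a 1 * a 2)
    :
    ∀ i, 2 ≤ i → i ≤ g - 1 →
      (prodAsc a (g - 1) * prodDesc u (g - 1)) * a i =
        a i * (prodAsc a (g - 1) * prodDesc u (g - 1)) ∧
      u i * (prodAsc a (g - 1) * prodDesc u (g - 1)) * u i =
        prodAsc a (g - 1) * prodDesc u (g - 1) := by
  intro i hi hig
  obtain ⟨k, rfl⟩ : ∃ k, i = k + 2 := ⟨i - 2, by omega⟩
  have hk : k + 2 ≤ g - 1 := hig
  have hz_a : ∀ j, j + 2 ≤ g - 1 → SemiconjBy (prodDesc u (g - 1)) (a (j + 2)) (a (j + 1)) :=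
    fun j hj => semiconjBy_prodDesc_of_relC2 hj hC1 (hC2 (j + 1) (by omega) (by omega))
  have hz_u : ∀ j, j + 2 ≤ g - 1 → SemiconjBy (prodDesc u (g - 1)) (u (j + 2)) (u (j + 1)) :=
    fun j hj => semiconjBy_prodDesc_of_braid hj hu1 (hu2 (j + 1) (by omega) hj)
  have hx_a := semiconjBy_prodAsc_of_braid hk ha1 (ha2 (k + 1) (by omega) hk)
  have hx_u := semiconjBy_prodAsc_inv_of_relC5 hk hC1 (relC5_of_semiconjBy hz_a hz_u hC5 k hk)
  refine ⟨hx_a.mul_left (hz_a k hk), ?_⟩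
  rw [← (hx_u.mul_left (hz_u k hk).inv_right).eq, inv_mul_cancel_right]

/-- relations (E3) and (E4): r a_i = a_i r and u_i r u_i = r for 2 ≤ i ≤ g-1,
where r = a_1 ⋯ a_{g-1} u_{g-1} ⋯ u_1. -/
theorem rel_E3_E4 (g : ℕ) (a u : ℕ → G)
    (ha1 : ∀ i j, 1 ≤ i → i + 2 ≤ j → j ≤ g - 1 → a i * a j = a j * a i)
    (ha2 : ∀ i, 1 ≤ i → i + 1 ≤ g - 1 → a i * a (i + 1) * a i = a (i + 1) * a i * a (i + 1))
    (hu1 : ∀ i j, 1 ≤ i → i + 2 ≤ j → j ≤ g - 1 → u i * u j = u j * u i)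
    (hu2 : ∀ i, 1 ≤ i → i + 1 ≤ g - 1 → u i * u (i + 1) * u i = u (i + 1) * u i * u (i + 1))
    (hC1 : ∀ i j, 1 ≤ i → i ≤ g - 1 → 1 ≤ j → j ≤ g - 1 → (i + 2 ≤ j ∨ j + 2 ≤ i) →
      a i * u j = u j * a i)
    (hC2 : ∀ i, 1 ≤ i → i ≤ g - 2 → a i * u (i + 1) * u i = u (i + 1) * u i * a (i + 1))
    (hC3 : ∀ i, 1 ≤ i → i ≤ g - 2 → a (i + 1) * u i * u (i + 1) = u i * u (i + 1) * a i)
    (hC4 : a 1 * u 1 * a 1 = u 1)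
    (hC5 : u 2 * a 1 * a 2 * u 1 = a 1 * a 2)
    :
    ∀ i, 2 ≤ i → i ≤ g - 1 →
      (prodAsc a (g - 1) * prodDesc u (g - 1)) * a i =
        a i * (prodAsc a (g - 1) * prodDesc u (g - 1)) ∧
      u i * (prodAsc a (g - 1) * prodDesc u (g - 1)) * u i =
        prodAsc a (g - 1) * prodDesc u (g - 1) :=
  rel_E3_E4_general g a u ha1 ha2 hu1 hu2 hC1 hC2 hC5
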